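/- arXiv:1307.1332 — 4 statements merged into one kernel-verified Lean document; each statement's English description precedes it below -/
import Mathlib

section
/- Tverberg's theorem: for any integers f ≥ 0 and d ≥ 1, every multiset Y of at least (d+1)f + 1 points in ℝ^d can be partitioned into f+1 nonempty multisets Y_1, ..., Y_{f+1} such that the intersection of their convex hulls is nonempty. -/
/-!
Sarkaria's tensor trick. Lift each point to `(a i, 1) ∈ ℝ^{d+1}` and tensor it with `f + 1`
vectors `v c ∈ ℝ^f` whose only linear relation is `∑ c, v c = 0`. Each class
`{(a i, 1) ⊗ v c | c}` has `0` as its barycentre, and there are more classes than the dimension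
`(d + 1) f`, so Bárány's colourful Carathéodory theorem picks `(a i, 1) ⊗ v (j i)` from each class
with `∑ i, w i • (a i, 1) ⊗ v (j i) = 0` for some convex weights `w`. Grouping by colour, the
relation forces all the sums `∑_{j i = c} w i • (a i, 1)` to coincide: the colour classes get equal,
hence positive, total weight and a common centre of mass.

For colourful Carathéodory, take a point `x` of least norm in the hulls of all colourful
selections. If `x ≠ 0`, the selected points carrying `x` lie on the supporting hyperplane
`⟪x, ·⟫ = ‖x‖²`, so at most `dim` of them are needed; an unused class has a point `q` with
`⟪x, q⟫ ≤ 0`, and swapping `q` in gives a hull containing `x` and `q`, hence shorter vectors.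
-/

open Finset Module
open scoped RealInnerProductSpace

section InnerProductSpace

variable {V : Type*} [NormedAddCommGroup V] [InnerProductSpace ℝ V]

theorem norm_sq_le_inner_of_isMinOn_norm {K : Set V} (hK : Convex ℝ K) {x w : V}
    (hx : x ∈ K) (hmin : IsMinOn (‖·‖) K x) (hw : w ∈ K) : ‖x‖ ^ 2 ≤ ⟪x, w⟫ := by
  have : Nonempty K := ⟨⟨x, hx⟩⟩
  have hinf : ‖0 - x‖ = ⨅ z : K, ‖0 - (z : V)‖ := by
    simp only [zero_sub, norm_neg]
    exact le_antisymm (le_ciInf fun z => hmin z.2)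
      (ciInf_le ⟨0, by rintro _ ⟨z, rfl⟩; positivity⟩ (⟨x, hx⟩ : K))
  have := (norm_eq_iInf_iff_real_inner_le_zero hK hx).1 hinf w hw
  rw [zero_sub, inner_neg_left, inner_sub_right, real_inner_self_eq_norm_sq] at this
  linarith

theorem AffineIndependent.card_le_finrank_of_inner_eq [FiniteDimensional ℝ V] {ι : Type*}
    [Fintype ι] {z : ι → V} (hz : AffineIndependent ℝ z) {x : V} (hx : x ≠ 0) {c : ℝ}
    (hc : ∀ k, ⟪x, z k⟫ = c) : Fintype.card ι ≤ finrank ℝ V := by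
  have hspan : vectorSpan ℝ (Set.range z) ≤ (ℝ ∙ x)ᗮ := by
    rw [vectorSpan_def, Submodule.span_le]
    rintro _ ⟨_, ⟨k, rfl⟩, _, ⟨k', rfl⟩, rfl⟩
    simp [Submodule.mem_orthogonal_singleton_iff_inner_right, inner_sub_right, hc]
  have hdim := Submodule.finrank_add_finrank_orthogonal (ℝ ∙ x)
  rw [finrank_span_singleton hx] at hdim
  have := hz.card_le_finrank_succ
  have := Submodule.finrank_mono hspan
  omega

theorem exists_card_le_finrank_mem_convexHull_image [FiniteDimensional ℝ V] {ι : Type*}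
    {g : ι → V} {x : V} (hx : x ≠ 0) (hxg : x ∈ convexHull ℝ (Set.range g))
    (hsupp : ∀ p ∈ convexHull ℝ (Set.range g), ‖x‖ ^ 2 ≤ ⟪x, p⟫) :
    ∃ I : Finset ι, #I ≤ finrank ℝ V ∧ x ∈ convexHull ℝ (g '' I) := by
  classical
  obtain ⟨κ, _, z, w, hzg, hz, hw0, hw1, hxz⟩ := eq_pos_convex_span_of_mem_convexHull hxg
  have hz_ge (k : κ) : ‖x‖ ^ 2 ≤ ⟪x, z k⟫ := hsupp _ (subset_convexHull ℝ _ (hzg ⟨k, rfl⟩))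
  -- `x` is a positive combination of the `z k`, which all lie on the far side of the
  -- hyperplane `⟪x, ·⟫ = ‖x‖ ^ 2` through `x`; so they all lie on it.
  have hplane (k : κ) : ⟪x, z k⟫ = ‖x‖ ^ 2 := by
    have hsum : ∑ k, w k * (⟪x, z k⟫ - ‖x‖ ^ 2) = 0 := by
      simp only [mul_sub, sum_sub_distrib, ← sum_mul, hw1, ← real_inner_smul_right,
        ← inner_sum, hxz, real_inner_self_eq_norm_sq]
      ring
    have := (sum_eq_zero_iff_of_nonneg fun k _ =>
      mul_nonneg (hw0 k).le (sub_nonneg.2 (hz_ge k))).1 hsum k (mem_univ k)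
    rcases mul_eq_zero.1 this with h | h
    · exact absurd h (hw0 k).ne'
    · linarith
  choose c hc using fun k => hzg ⟨k, rfl⟩
  refine ⟨univ.image c, card_image_le.trans (hz.card_le_finrank_of_inner_eq hx hplane), ?_⟩
  exact mem_convexHull_of_exists_fintype w z (fun k => (hw0 k).le) hw1
    (fun k => ⟨c k, by simp, hc k⟩) hxz

theorem exists_zero_mem_convexHull_colorful [FiniteDimensional ℝ V] {ι : Type*} [Fintype ι]
    (hι : finrank ℝ V < Fintype.card ι) (C : ι → Finset V)
    (hC : ∀ i, (0 : V) ∈ convexHull ℝ (C i : Set V)) :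
    ∃ g : ι → V, (∀ i, g i ∈ C i) ∧ (0 : V) ∈ convexHull ℝ (Set.range g) := by
  classical
  let K : (∀ i, C i) → Set V := fun g => convexHull ℝ (Set.range fun i => (g i : V))
  have : Nonempty ι := Fintype.card_pos_iff.1 (by omega)
  have : Nonempty (∀ i, C i) := by
    have hCne (i : ι) : (C i).Nonempty := by
      simpa using (convexHull_nonempty_iff (𝕜 := ℝ)).1 ⟨0, hC i⟩
    exact ⟨fun i => ⟨_, (hCne i).choose_spec⟩⟩
  have hcpt : IsCompact (⋃ g, K g) :=
    isCompact_iUnion fun g => (Set.finite_range _).isCompact_convexHull ℝ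
  have hne : (⋃ g, K g).Nonempty :=
    (convexHull_nonempty_iff.2 (Set.range_nonempty _)).mono
      (Set.subset_iUnion K (Classical.arbitrary _))
  obtain ⟨x, hxK, hxmin⟩ := hcpt.exists_isMinOn hne continuous_norm.continuousOn
  have hsupp (g : ∀ i, C i) (hx : x ∈ K g) : ∀ p ∈ K g, ‖x‖ ^ 2 ≤ ⟪x, p⟫ := fun p hp =>
    norm_sq_le_inner_of_isMinOn_norm (convex_convexHull ℝ _) hx
      (hxmin.on_subset (Set.subset_iUnion K g)) hp
  obtain ⟨g, hxg⟩ := Set.mem_iUnion.1 hxK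
  refine ⟨fun i => g i, fun i => (g i).2, ?_⟩
  suffices x = 0 from this ▸ hxg
  by_contra hx0
  obtain ⟨I, hI, hxI⟩ := exists_card_le_finrank_mem_convexHull_image hx0 hxg (hsupp g hxg)
  obtain ⟨i₀, -, hi₀⟩ := exists_mem_notMem_of_card_lt_card (s := I) (t := univ)
    (by rw [card_univ]; omega)
  obtain ⟨q, hqC, hq⟩ : ∃ q ∈ C i₀, ⟪x, q⟫ ≤ 0 := by
    by_contra! hpos
    have h0 : (0 : ℝ) < ⟪x, (0 : V)⟫ :=
      convexHull_min hpos (convex_halfSpace_gt (innerₛₗ ℝ x).isLinear 0) (hC i₀)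
    simp at h0
  let g' := Function.update g i₀ ⟨q, hqC⟩
  have hxg' : x ∈ K g' := by
    refine convexHull_mono ?_ hxI
    rintro _ ⟨i, hi, rfl⟩
    exact ⟨i, by simp [g', Function.update_of_ne (ne_of_mem_of_not_mem hi hi₀)]⟩
  have hqg' : q ∈ K g' := subset_convexHull ℝ _ ⟨i₀, by simp [g']⟩
  have := hsupp g' hxg' q hqg'
  have := pow_pos (norm_pos_iff.2 hx0) 2
  linarith

end InnerProductSpace

theorem exists_weights_of_mem_convexHull_range {E ι : Type*} [AddCommGroup E] [Module ℝ E]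
    [Fintype ι] {v : ι → E} {x : E} (hx : x ∈ convexHull ℝ (Set.range v)) :
    ∃ w : ι → ℝ, (∀ i, 0 ≤ w i) ∧ ∑ i, w i = 1 ∧ ∑ i, w i • v i = x := by
  classical
  rw [convexHull_range_eq_exists_affineCombination] at hx
  obtain ⟨s, w, hw0, hw1, rfl⟩ := hx
  refine ⟨fun i => if i ∈ s then w i else 0, fun i => ?_, ?_, ?_⟩
  · dsimp only
    split_ifs with hi
    exacts [hw0 i hi, le_rfl]
  · simp [hw1]
  · simp [ite_smul, affineCombination_eq_linear_combination s v w hw1]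

/-- The vectors `e₀, …, e_{f-1}, -(e₀ + ⋯ + e_{f-1})` of `ℝ^f`; up to scaling, their only linear
relation is `∑ c, sarkariaVector f c = 0`. -/
def sarkariaVector (f : ℕ) (c : Fin (f + 1)) (l : Fin f) : ℝ :=
  (if c = l.castSucc then 1 else 0) - (if c = Fin.last f then 1 else 0)

theorem sum_mul_sarkariaVector (f : ℕ) (u : Fin (f + 1) → ℝ) (l : Fin f) :
    ∑ c, u c * sarkariaVector f c l = u l.castSucc - u (Fin.last f) := by
  simp [sarkariaVector, mul_sub, sum_sub_distrib]

theorem sum_sarkariaVector (f : ℕ) (l : Fin f) : ∑ c, sarkariaVector f c l = 0 := by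
  simpa using sum_mul_sarkariaVector f 1 l

theorem eq_last_of_sum_mul_sarkariaVector_eq_zero {f : ℕ} {u : Fin (f + 1) → ℝ}
    (hu : ∀ l, ∑ c, u c * sarkariaVector f c l = 0) (c : Fin (f + 1)) :
    u c = u (Fin.last f) := by
  rcases Fin.eq_castSucc_or_eq_last c with ⟨l, rfl⟩ | rfl
  · linarith [hu l, sum_mul_sarkariaVector f u l]
  · rfl

theorem exists_coloring_sum_fiber_eq {ι κ : Type*} [Fintype ι] [Fintype κ] (f : ℕ)
    (y : ι → κ → ℝ) (h : Fintype.card κ * f < Fintype.card ι) :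
    ∃ (j : ι → Fin (f + 1)) (w : ι → ℝ), (∀ i, 0 ≤ w i) ∧ ∑ i, w i = 1 ∧
      ∀ c k, ∑ i with j i = c, w i * y i k = ∑ i with j i = Fin.last f, w i * y i k := by
  classical
  let b (i : ι) (c : Fin (f + 1)) : EuclideanSpace ℝ (κ × Fin f) :=
    WithLp.toLp 2 fun p => y i p.1 * sarkariaVector f c p.2
  have hb (i : ι) :
      (0 : EuclideanSpace ℝ (κ × Fin f)) ∈ convexHull ℝ (univ.image (b i) : Set _) := by
    refine mem_convexHull_of_exists_fintype (fun _ => ((f : ℝ) + 1)⁻¹) (b i)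
      (fun _ => by positivity) ?_ (fun c => by simp) ?_
    · simp only [sum_const, card_univ, Fintype.card_fin, nsmul_eq_mul, Nat.cast_add,
        Nat.cast_one]
      exact mul_inv_cancel₀ (by positivity)
    · ext p
      simp [b, ← mul_sum, sum_sarkariaVector]
  obtain ⟨g, hg, h0⟩ := exists_zero_mem_convexHull_colorful
    (by simpa [finrank_euclideanSpace] using h) _ hb
  choose j hj using fun i => mem_image.1 (hg i)
  obtain ⟨w, hw0, hw1, hw⟩ := exists_weights_of_mem_convexHull_range h0
  refine ⟨j, w, hw0, hw1, fun c k => eq_last_of_sum_mul_sarkariaVector_eq_zero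
    (u := fun c => ∑ i with j i = c, w i * y i k) (fun l => ?_) c⟩
  have hkl : ∑ i, w i * y i k * sarkariaVector f (j i) l = 0 := by
    simpa [← (hj _).2, b, mul_assoc] using congrArg (fun u => u (k, l)) hw
  calc ∑ c, (∑ i with j i = c, w i * y i k) * sarkariaVector f c l
      = ∑ c, ∑ i with j i = c, w i * y i k * sarkariaVector f (j i) l := by
        refine sum_congr rfl fun c _ => ?_
        rw [sum_mul]
        exact sum_congr rfl fun i hi => by rw [(mem_filter.1 hi).2]
    _ = 0 := by rw [sum_fiberwise, hkl]

theorem tverberg_partition {E ι : Type*} [AddCommGroup E] [Module ℝ E] [FiniteDimensional ℝ E]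
    [Fintype ι] (f : ℕ) (a : ι → E) (h : (finrank ℝ E + 1) * f < Fintype.card ι) :
    ∃ (j : ι → Fin (f + 1)) (x : E), ∀ c, x ∈ convexHull ℝ (a '' {i | j i = c}) := by
  classical
  let B := Module.finBasis ℝ E
  -- the coordinates of the lifted point `(a i, 1)`
  let y (i : ι) (k : Option (Fin (finrank ℝ E))) : ℝ := k.elim 1 (B.repr (a i))
  obtain ⟨j, w, hw0, hw1, hfib⟩ := exists_coloring_sum_fiber_eq f y (by simpa using h)
  have hmass (c : Fin (f + 1)) : ∑ i with j i = c, w i = ((f : ℝ) + 1)⁻¹ := by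
    have hlast (c : Fin (f + 1)) : ∑ i with j i = c, w i = ∑ i with j i = Fin.last f, w i := by
      simpa [y] using hfib c none
    have hsum := (sum_fiberwise univ j w).trans hw1
    simp only [hlast, sum_const, card_univ, Fintype.card_fin, nsmul_eq_mul] at hsum
    push_cast at hsum
    rw [hlast, eq_inv_of_mul_eq_one_right hsum]
  have hmoment (c : Fin (f + 1)) :
      ∑ i with j i = c, w i • a i = ∑ i with j i = Fin.last f, w i • a i :=
    B.ext_elem fun m => by simpa [y, Finsupp.finsetSum_apply] using hfib c (some m)
  refine ⟨j, (univ.filter (j · = Fin.last f)).centerMass w a, fun c => ?_⟩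
  have hcenter : (univ.filter (j · = c)).centerMass w a =
      (univ.filter (j · = Fin.last f)).centerMass w a := by
    simp only [centerMass, hmass, hmoment]
  rw [← hcenter]
  exact centerMass_mem_convexHull _ (fun i _ => hw0 i) (by rw [hmass]; positivity)
    (fun i hi => ⟨i, by simpa using hi, rfl⟩)

theorem stmt_2_general (d f : ℕ)
    (Y : Multiset (EuclideanSpace ℝ (Fin d)))
    (hY : (d + 1) * f + 1 ≤ Multiset.card Y) :
    ∃ P : Fin (f + 1) → Multiset (EuclideanSpace ℝ (Fin d)),
      (∀ l, P l ≠ 0) ∧ (∑ l, P l = Y) ∧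
      (⋂ l, convexHull ℝ {x | x ∈ P l}).Nonempty := by
  classical
  let a : Y → EuclideanSpace ℝ (Fin d) := (↑)
  obtain ⟨j, x, hx⟩ := tverberg_partition f a (by simpa using hY)
  let P (c : Fin (f + 1)) := (univ.filter (j · = c)).val.map a
  have hxP (c : Fin (f + 1)) : x ∈ convexHull ℝ {x | x ∈ P c} := by
    convert hx c using 2
    ext
    simp [P]
  refine ⟨P, fun c => ?_, ?_, ⟨x, Set.mem_iInter.2 hxP⟩⟩
  · obtain ⟨z, hz⟩ := convexHull_nonempty_iff.1 ⟨x, hxP c⟩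
    rintro h0
    simp [h0] at hz
  · have hfib : ∑ c, (univ.filter (j · = c)).val = (univ : Finset Y).val := by
      simp_rw [← sum_multiset_singleton]
      exact sum_fiberwise univ j _
    calc ∑ c, P c = Multiset.map a (∑ c, (univ.filter (j · = c)).val) := by
          rw [← Multiset.mapAddMonoidHom_apply, map_sum]; rfl
      _ = Y := by rw [hfib]; exact Multiset.map_univ_coe Y

/-- Tverberg's theorem for multisets of points in ℝ^d. -/
theorem stmt_2 (d f : ℕ) (hd : 1 ≤ d)
    (Y : Multiset (EuclideanSpace ℝ (Fin d)))
    (hY : (d + 1) * f + 1 ≤ Multiset.card Y) :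
    ∃ P : Fin (f + 1) → Multiset (EuclideanSpace ℝ (Fin d)),
      (∀ l, P l ≠ 0) ∧ (∑ l, P l = Y) ∧
      (⋂ l, convexHull ℝ {x | x ∈ P l}).Nonempty :=
  stmt_2_general d f Y hY
end

section
/- Let X be a multiset of points in ℝ^d with |X| ≥ (d+1)f + 1 for some f ≥ 0. Then the intersection over all sub-multisets C of X with |C| = |X| − f of the convex hulls conv(C) is nonempty. -/
/-- If `|X| ≥ (d+1)f + 1`, the intersection of convex hulls of all sub-multisets
of size `|X| - f` is nonempty. -/
theorem stmt_3 (d f : ℕ)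
    (X : Multiset (EuclideanSpace ℝ (Fin d)))
    (hX : (d + 1) * f + 1 ≤ Multiset.card X) :
    (⋂ C ∈ {C : Multiset (EuclideanSpace ℝ (Fin d)) |
        C ≤ X ∧ Multiset.card C = Multiset.card X - f},
      convexHull ℝ {x | x ∈ C}).Nonempty := by
  classical
  let E := EuclideanSpace ℝ (Fin d)
  set n := Multiset.card X - f with hn
  set s : Finset (Multiset E) := (X.powersetCard n).toFinset with hs
  have hset : {C : Multiset E | C ≤ X ∧ Multiset.card C = Multiset.card X - f} = ↑s := by
    ext C
    simp [hs, Multiset.mem_powersetCard, hn]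
  rw [hset]
  have key : (⋂ C ∈ s, convexHull ℝ {x : E | x ∈ C}).Nonempty := by
    apply Convex.helly_theorem' (fun C _ => convex_convexHull ℝ _)
    intro I hI hIcard
    -- find a point of X in every C ∈ I
    have hex : ∃ x ∈ X, ∀ C ∈ I, x ∈ C := by
      by_contra hcon
      push_neg at hcon
      set D : Multiset E := ∑ C ∈ I, (X - C) with hD
      have hXD : X ≤ D := by
        rw [Multiset.le_iff_count]
        intro x
        by_cases hx : x ∈ X
        · obtain ⟨C, hCI, hxC⟩ := hcon x hx
          have hC0 : Multiset.count x C = 0 := Multiset.count_eq_zero.2 hxC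
          have : Multiset.count x (X - C) = Multiset.count x X := by
            rw [Multiset.count_sub, hC0, Nat.sub_zero]
          calc Multiset.count x X = Multiset.count x (X - C) := this.symm
            _ ≤ Multiset.count x D := by
                rw [hD, Multiset.count_sum']
                exact Finset.single_le_sum (f := fun C' => Multiset.count x (X - C'))
                  (fun C' _ => Nat.zero_le _) hCI
        · simp [Multiset.count_eq_zero.2 hx]
      have hcardD : Multiset.card D = I.card * f := by
        have hcs : ∀ (J : Finset (Multiset E)),
            Multiset.card (∑ C ∈ J, (X - C)) = ∑ C ∈ J, Multiset.card (X - C) := by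
          intro J
          induction J using Finset.cons_induction with
          | empty => simp
          | cons a t ha ih => simp [Finset.sum_cons, ih]
        rw [hD, hcs, Finset.sum_congr rfl (fun C hCI => ?_),
          Finset.sum_const, smul_eq_mul]
        have hCs : C ∈ s := hI hCI
        rw [hs, Multiset.mem_toFinset, Multiset.mem_powersetCard] at hCs
        have hf1 : f ≤ (d + 1) * f := Nat.le_mul_of_pos_left f (by omega)
        have hf : f ≤ Multiset.card X := by omega
        rw [Multiset.card_sub hCs.1, hCs.2, hn]
        omega
      have h1 : Multiset.card X ≤ Multiset.card D := Multiset.card_le_card hXD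
      have hrk : Module.finrank ℝ E = d := finrank_euclideanSpace_fin
      rw [hrk] at hIcard
      have : Multiset.card D ≤ (d + 1) * f := by
        rw [hcardD]; exact Nat.mul_le_mul_right f hIcard
      omega
    obtain ⟨x, _, hx⟩ := hex
    exact ⟨x, Set.mem_biInter fun C hC => subset_convexHull ℝ _ (hx C hC)⟩
  exact key
end

section
/- For row stochastic square matrices A(1), ..., A(p) of the same size, the coefficient δ of the (backward) product satisfies δ(A(p)···A(1)) ≤ Π_{τ=1}^p λ(A(τ)), where δ(A) = max_j max_{i1,i2} |A_{i1,j} − A_{i2,j}| and λ(A) = 1 − min_{i1,i2} Σ_j min(A_{i1,j}, A_{i2,j}). -/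
/-!
Write `c k = min (B i₁ k) (B i₂ k)`. Since both rows of `B` sum to one, the rows `B i₁ - c` and
`B i₂ - c` are nonnegative weight vectors with the same total mass `s = 1 - ∑ k, c k ≤ λ(B)`, so
`(B * M) i₁ j - (B * M) i₂ j` is a difference of two such weighted sums of column `j` of `M`, at most
`s` times the spread of that column. Hence `δ(B * M) ≤ λ(B) δ(M)`, and Hajnal's inequality follows by
induction on the number of factors.
-/

open Finset

namespace Matrix

variable {ι κ ν : Type*}

/-- The coefficient of ergodicity `λ(B)`. -/
noncomputable def ergodicityCoeff [Fintype κ] (B : Matrix ι κ ℝ) : ℝ :=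
  1 - ⨅ i₁, ⨅ i₂, ∑ k, min (B i₁ k) (B i₂ k)

theorem one_sub_sum_min_le_ergodicityCoeff [Finite ι] [Fintype κ] (B : Matrix ι κ ℝ) (i₁ i₂ : ι) :
    1 - ∑ k, min (B i₁ k) (B i₂ k) ≤ ergodicityCoeff B := by
  have h₁ := ciInf_le (Finite.bddBelow_range fun i ↦ ⨅ i', ∑ k, min (B i k) (B i' k)) i₁
  have h₂ := ciInf_le (Finite.bddBelow_range fun i' ↦ ∑ k, min (B i₁ k) (B i' k)) i₂
  unfold ergodicityCoeff
  linarith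

theorem sum_mul_sub_sum_mul_le_of_sum_eq [Fintype κ] [Nonempty κ] {u v x : κ → ℝ} {d : ℝ}
    (huv : ∑ k, u k = ∑ k, v k) (hx : ∀ k l, x k - x l ≤ d) :
    ∑ k, u k * x k - ∑ k, v k * x k ≤ (∑ k, u k - ∑ k, min (u k) (v k)) * d := by
  obtain ⟨k₁, hk₁⟩ := Finite.exists_max x
  obtain ⟨k₂, hk₂⟩ := Finite.exists_min x
  set s := ∑ k, u k - ∑ k, min (u k) (v k)
  have hs : 0 ≤ s := sub_nonneg.2 (sum_le_sum fun k _ ↦ min_le_left _ _)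
  have hu : ∑ k, (u k - min (u k) (v k)) * x k ≤ s * x k₁ :=
    calc ∑ k, (u k - min (u k) (v k)) * x k
        ≤ ∑ k, (u k - min (u k) (v k)) * x k₁ :=
          sum_le_sum fun k _ ↦ mul_le_mul_of_nonneg_left (hk₁ k) (sub_nonneg.2 (min_le_left _ _))
      _ = s * x k₁ := by rw [← sum_mul, sum_sub_distrib]
  have hv : s * x k₂ ≤ ∑ k, (v k - min (u k) (v k)) * x k :=
    calc s * x k₂ = ∑ k, (v k - min (u k) (v k)) * x k₂ := by rw [← sum_mul, sum_sub_distrib, ← huv]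
      _ ≤ ∑ k, (v k - min (u k) (v k)) * x k :=
          sum_le_sum fun k _ ↦ mul_le_mul_of_nonneg_left (hk₂ k) (sub_nonneg.2 (min_le_right _ _))
  calc ∑ k, u k * x k - ∑ k, v k * x k
      = ∑ k, (u k - min (u k) (v k)) * x k - ∑ k, (v k - min (u k) (v k)) * x k := by
        simp only [sub_mul, sum_sub_distrib]; ring
    _ ≤ s * (x k₁ - x k₂) := by linarith
    _ ≤ s * d := mul_le_mul_of_nonneg_left (hx k₁ k₂) hs

theorem abs_mul_apply_sub_mul_apply_le [Finite ι] [Fintype κ] {B : Matrix ι κ ℝ}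
    {M : Matrix κ ν ℝ} {d : ℝ} (hB : ∀ i, ∑ k, B i k = 1)
    (hM : ∀ j k l, |M k j - M l j| ≤ d) (j : ν) (i₁ i₂ : ι) :
    |(B * M) i₁ j - (B * M) i₂ j| ≤ ergodicityCoeff B * d := by
  obtain ⟨k, -, -⟩ := exists_ne_zero_of_sum_ne_zero (by rw [hB i₁]; exact one_ne_zero)
  have : Nonempty κ := ⟨k⟩
  have hd : 0 ≤ d := by simpa using hM j k k
  have hx : ∀ k l, M k j - M l j ≤ d := fun k l ↦ (le_abs_self _).trans (hM j k l)
  have key : ∀ i i', (B * M) i j - (B * M) i' j ≤ ergodicityCoeff B * d := fun i i' ↦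
    calc (B * M) i j - (B * M) i' j ≤ (1 - ∑ k, min (B i k) (B i' k)) * d := by
          simpa only [mul_apply, hB i] using
            sum_mul_sub_sum_mul_le_of_sum_eq ((hB i).trans (hB i').symm) hx
      _ ≤ ergodicityCoeff B * d :=
          mul_le_mul_of_nonneg_right (one_sub_sum_min_le_ergodicityCoeff B i i') hd
  exact abs_sub_le_iff.2 ⟨key i₁ i₂, key i₂ i₁⟩

theorem abs_list_prod_apply_sub_list_prod_apply_le [Fintype ι] [DecidableEq ι]
    {L : List (Matrix ι ι ℝ)} (hL : ∀ B ∈ L, ∀ i, ∑ k, B i k = 1) (j i₁ i₂ : ι) :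
    |L.prod i₁ j - L.prod i₂ j| ≤ (L.map ergodicityCoeff).prod := by
  induction L generalizing j i₁ i₂ with
  | nil =>
    simp only [List.prod_nil, List.map_nil, one_apply]
    split_ifs <;> norm_num
  | cons B L ih =>
    rw [List.prod_cons, List.map_cons, List.prod_cons]
    exact abs_mul_apply_sub_mul_apply_le (hL B List.mem_cons_self)
      (ih fun C hC ↦ hL C (List.mem_cons_of_mem _ hC)) j i₁ i₂

end Matrix

theorem stmt_7_general {n p : ℕ}
    (A : Fin p → Matrix (Fin n) (Fin n) ℝ)
    (hrow : ∀ τ i, ∑ k, A τ i k = 1) :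
    ∀ j i₁ i₂,
      |(List.ofFn A).reverse.prod i₁ j - (List.ofFn A).reverse.prod i₂ j|
        ≤ ∏ τ, (1 - ⨅ i₁', ⨅ i₂', ∑ k, min (A τ i₁' k) (A τ i₂' k)) := by
  intro j i₁ i₂
  have hL : ∀ B ∈ (List.ofFn A).reverse, ∀ i, ∑ k, B i k = 1 := by
    simp only [List.mem_reverse, List.mem_ofFn, forall_exists_index, forall_apply_eq_imp_iff]
    exact hrow
  have h := Matrix.abs_list_prod_apply_sub_list_prod_apply_le hL j i₁ i₂
  refine h.trans_eq ?_
  rw [List.map_reverse, List.prod_reverse, List.map_ofFn, List.prod_ofFn]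
  rfl

/-- Hajnal's inequality: `δ` of a backward product of row stochastic matrices
is at most the product of the `λ` coefficients. -/
theorem stmt_7 {n p : ℕ} (hn : 0 < n)
    (A : Fin p → Matrix (Fin n) (Fin n) ℝ)
    (hnonneg : ∀ τ i k, 0 ≤ A τ i k) (hrow : ∀ τ i, ∑ k, A τ i k = 1) :
    ∀ j i₁ i₂,
      |(List.ofFn A).reverse.prod i₁ j - (List.ofFn A).reverse.prod i₂ j|
        ≤ ∏ τ, (1 - ⨅ i₁', ⨅ i₂', ∑ k, min (A τ i₁' k) (A τ i₂' k)) :=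
  stmt_7_general A hrow
end

section
/- Let M be an n×n row stochastic matrix such that every row has at least n − f entries equal to 1/m for some m ≤ n (and the rest zero), where n − f ≥ 2f + 1 and at most f designated 'faulty' columns exist. Then for any two rows i, j there exists a 'fault-free' column g with min(M_{i,g}, M_{j,g}) ≥ 1/n, and consequently λ(M) ≤ 1 − 1/n. -/
open Classical in
/-- For a row stochastic matrix whose rows have at least `n - f` entries equal
to `1/m` (for some `m ≤ n`) and the rest zero, any two rows share a fault-free
column with both entries at least `1/n`, and `λ(M) ≤ 1 - 1/n`. -/
theorem stmt_16 {n f : ℕ} (M : Matrix (Fin n) (Fin n) ℝ)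
    (hnonneg : ∀ i k, 0 ≤ M i k) (hrow : ∀ i, ∑ k, M i k = 1)
    (hnf : 2 * f + 1 ≤ n - f)
    (F : Finset (Fin n)) (hF : F.card ≤ f)
    (hsupp : ∀ i, ∃ m : ℕ, m ≤ n ∧
      n - f ≤ (Finset.univ.filter (fun k => M i k = 1 / (m : ℝ))).card ∧
      ∀ k, M i k = 1 / (m : ℝ) ∨ M i k = 0) :
    (∀ i j, ∃ g, g ∉ F ∧ (1 : ℝ) / n ≤ min (M i g) (M j g)) ∧
      1 - (⨅ i, ⨅ j, ∑ k, min (M i k) (M j k)) ≤ 1 - (1 : ℝ) / n := by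
  have hn3 : 3 * f + 1 ≤ n := by omega
  have hn0 : 0 < n := by omega
  have hmpos : ∀ i (m : ℕ), (∀ k, M i k = 1 / (m : ℝ) ∨ M i k = 0) → 1 ≤ m := by
    intro i m hall
    by_contra h
    have hm0 : m = 0 := by omega
    subst hm0
    have hz : ∑ k, M i k = 0 := Finset.sum_eq_zero (fun k _ => by
      rcases hall k with h | h <;> simp [h])
    rw [hrow i] at hz; norm_num at hz
  have key : ∀ i j, ∃ g, g ∉ F ∧ (1 : ℝ) / n ≤ min (M i g) (M j g) := by
    intro i j
    obtain ⟨m, hm, hci, hall⟩ := hsupp i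
    obtain ⟨m', hm', hcj, hall'⟩ := hsupp j
    have hm1 := hmpos i m hall
    have hm1' := hmpos j m' hall'
    set S := Finset.univ.filter (fun k => M i k = 1 / (m : ℝ)) with hS
    set T := Finset.univ.filter (fun k => M j k = 1 / (m' : ℝ)) with hT
    have hu : (S ∪ T).card ≤ n := by
      simpa using Finset.card_le_univ (S ∪ T)
    have hsum := Finset.card_union_add_card_inter S T
    have hsd := Finset.card_le_card_sdiff_add_card (s := S ∩ T) (t := F)
    have hpos : 0 < ((S ∩ T) \ F).card := by omega
    obtain ⟨g, hg⟩ := Finset.card_pos.mp hpos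
    rw [Finset.mem_sdiff, Finset.mem_inter] at hg
    obtain ⟨⟨hgS, hgT⟩, hgF⟩ := hg
    rw [hS, Finset.mem_filter] at hgS
    rw [hT, Finset.mem_filter] at hgT
    refine ⟨g, hgF, le_min ?_ ?_⟩
    · rw [hgS.2]
      apply one_div_le_one_div_of_le
      · exact_mod_cast hm1
      · exact_mod_cast hm
    · rw [hgT.2]
      apply one_div_le_one_div_of_le
      · exact_mod_cast hm1'
      · exact_mod_cast hm'
  refine ⟨key, ?_⟩
  have hle : (1 : ℝ) / n ≤ ⨅ i, ⨅ j, ∑ k, min (M i k) (M j k) := by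
    haveI : Nonempty (Fin n) := ⟨⟨0, hn0⟩⟩
    refine le_ciInf fun i => le_ciInf fun j => ?_
    obtain ⟨g, hgF, hg⟩ := key i j
    calc (1 : ℝ) / n ≤ min (M i g) (M j g) := hg
      _ ≤ ∑ k, min (M i k) (M j k) :=
        Finset.single_le_sum (fun k _ => le_min (hnonneg i k) (hnonneg j k))
          (Finset.mem_univ g)
  linarith
end
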